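/- Let A = a₀·I + a·σ, B = b₀·I + b·σ, C = c₀·I + c·σ be qubit observables whose Bloch vectors a, b, c ∈ ℝ³ are linearly independent (so the 3×3 Gram matrix T_{a,b,c} with entries ⟨a,a⟩, ⟨a,b⟩, ⟨a,c⟩, etc., is invertible). Then for every unit vector ψ ∈ ℂ², the vector v = (⟨A⟩_ψ − a₀, ⟨B⟩_ψ − b₀, ⟨C⟩_ψ − c₀) satisfies v T_{a,b,c}^{-1} vᵀ = 1; i.e., the triple of expectation values lies exactly on the boundary surface of the ellipsoid {(r,s,t) : ω_{A,B,C}(r,s,t) ≤ 1}. -/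

import Mathlib

/-!
The Bloch vector `n = (⟨σ₁⟩_ψ, ⟨σ₂⟩_ψ, ⟨σ₃⟩_ψ)` of a state `ψ ∈ ℂ²` has `‖n‖ = ‖ψ‖²`, and
`⟨a₀ I + a·σ⟩_ψ = a₀ ‖ψ‖² + ⟨a, n⟩`. So for a unit vector `ψ` the shifted expectation values are
the coordinates `⟨a, n⟩, ⟨b, n⟩, ⟨c, n⟩` of the unit vector `n` against the basis `a, b, c` of `ℝ³`.
Writing `n = ∑ yᵢ uᵢ` in a basis `u` with Gram matrix `G`, these coordinates form `G y`, so the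
inverse Gram form evaluated at them is `yᴴ G y = ‖n‖² = 1`.
-/

open Matrix MeasureTheory
open scoped ComplexOrder

/-- The Pauli matrix `σ₁`. -/
noncomputable def sigma1 : Matrix (Fin 2) (Fin 2) ℂ := !![0, 1; 1, 0]

/-- The Pauli matrix `σ₂`. -/
noncomputable def sigma2 : Matrix (Fin 2) (Fin 2) ℂ := !![0, -Complex.I; Complex.I, 0]

/-- The Pauli matrix `σ₃`. -/
noncomputable def sigma3 : Matrix (Fin 2) (Fin 2) ℂ := !![1, 0; 0, -1]

/-- The qubit observable `A = a₀·I + a·σ` with Bloch vector `a ∈ ℝ³`. -/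
noncomputable def qubitObs (a₀ : ℝ) (a : EuclideanSpace ℝ (Fin 3)) :
    Matrix (Fin 2) (Fin 2) ℂ :=
  a₀ • (1 : Matrix (Fin 2) (Fin 2) ℂ) + a 0 • sigma1 + a 1 • sigma2 + a 2 • sigma3

/-- Expectation value `⟨A⟩_ψ = ⟨ψ, Aψ⟩` of the observable `A` in the pure state `ψ`. -/
noncomputable def expVal (A : Matrix (Fin 2) (Fin 2) ℂ) (ψ : EuclideanSpace ℂ (Fin 2)) : ℝ :=
  ((star (fun i => ψ i) : Fin 2 → ℂ) ⬝ᵥ A.mulVec (fun i => ψ i)).re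

/-- Standard deviation `Δ_ψ A = √(⟨ψ,A²ψ⟩ − ⟨ψ,Aψ⟩²)` in the pure state `ψ`. -/
noncomputable def devPure (A : Matrix (Fin 2) (Fin 2) ℂ) (ψ : EuclideanSpace ℂ (Fin 2)) : ℝ :=
  Real.sqrt (expVal (A * A) ψ - (expVal A ψ) ^ 2)

/-- The 3×3 Gram matrix `T_{a,b,c}` of the Bloch vectors `a, b, c ∈ ℝ³`. -/
noncomputable def gram3 (a b c : EuclideanSpace ℝ (Fin 3)) : Matrix (Fin 3) (Fin 3) ℝ :=
  !![inner ℝ a a, inner ℝ a b, inner ℝ a c;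
     inner ℝ b a, inner ℝ b b, inner ℝ b c;
     inner ℝ c a, inner ℝ c b, inner ℝ c c]

open scoped InnerProductSpace

theorem Matrix.star_dotProduct_inv_gram_mulVec_eq_inner_self {𝕜 E ι : Type*} [RCLike 𝕜]
    [NormedAddCommGroup E] [InnerProductSpace 𝕜 E] [Fintype ι] [DecidableEq ι]
    (u : Module.Basis ι 𝕜 E) (x : E) :
    star (fun i ↦ ⟪u i, x⟫_𝕜) ⬝ᵥ (gram 𝕜 u)⁻¹ *ᵥ (fun i ↦ ⟪u i, x⟫_𝕜) = ⟪x, x⟫_𝕜 := by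
  set y := u.repr x
  have hx : ∑ i, y i • u i = x := u.sum_repr x
  have hv : (fun i ↦ ⟪u i, x⟫_𝕜) = gram 𝕜 u *ᵥ y := by
    ext i
    simp [← hx, inner_sum, inner_smul_right, mulVec, dotProduct, gram_apply, mul_comm]
  have hG : IsUnit (gram 𝕜 u).det :=
    isUnit_iff_ne_zero.mpr (det_gram_ne_zero_iff_linearIndependent.mpr u.linearIndependent)
  rw [hv, mulVec_mulVec, nonsing_inv_mul _ hG, one_mulVec, star_mulVec,
    (isHermitian_gram 𝕜 _).eq, ← dotProduct_mulVec, star_dotProduct_gram_mulVec, hx]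

theorem gram3_eq_gram (a b c : EuclideanSpace ℝ (Fin 3)) : gram3 a b c = gram ℝ ![a, b, c] := by
  ext i j
  fin_cases i <;> fin_cases j <;> rfl

section expVal

variable (ψ : EuclideanSpace ℂ (Fin 2))

theorem expVal_add (A B : Matrix (Fin 2) (Fin 2) ℂ) :
    expVal (A + B) ψ = expVal A ψ + expVal B ψ := by
  rw [expVal, add_mulVec, dotProduct_add, Complex.add_re, expVal, expVal]

theorem expVal_smul (r : ℝ) (A : Matrix (Fin 2) (Fin 2) ℂ) :
    expVal (r • A) ψ = r * expVal A ψ := by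
  rw [expVal, smul_mulVec, dotProduct_smul, Complex.smul_re, smul_eq_mul, expVal]

theorem EuclideanSpace.norm_sq_fin_two :
    ‖ψ‖ ^ 2 = Complex.normSq (ψ 0) + Complex.normSq (ψ 1) := by
  simp [EuclideanSpace.norm_sq_eq, Fin.sum_univ_two, Complex.sq_norm]

theorem expVal_one : expVal 1 ψ = ‖ψ‖ ^ 2 := by
  simp [expVal, EuclideanSpace.norm_sq_fin_two, dotProduct, Fin.sum_univ_two, Complex.normSq_apply]

theorem expVal_sigma1 : expVal sigma1 ψ = 2 * (star (ψ 0) * ψ 1).re := by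
  simp only [expVal, dotProduct, Pi.star_apply, RCLike.star_def, mulVec, sigma1, of_apply,
    cons_val', cons_val_fin_one, Fin.sum_univ_two, cons_val_zero, cons_val_one, zero_mul, one_mul,
    zero_add, add_zero, Complex.add_re, Complex.mul_re, Complex.conj_re, Complex.conj_im, neg_mul,
    sub_neg_eq_add]
  ring

theorem expVal_sigma2 : expVal sigma2 ψ = 2 * (star (ψ 0) * ψ 1).im := by
  simp only [expVal, dotProduct, Pi.star_apply, RCLike.star_def, mulVec, sigma2, of_apply,
    cons_val', cons_val_fin_one, Fin.sum_univ_two, cons_val_zero, cons_val_one, zero_mul, neg_mul,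
    zero_add, mul_neg, add_zero, Complex.add_re, Complex.neg_re, Complex.mul_re, Complex.conj_re,
    Complex.I_re, Complex.I_im, one_mul, zero_sub, Complex.conj_im, Complex.mul_im, sub_neg_eq_add,
    neg_add_rev, neg_neg]
  ring

theorem expVal_sigma3 : expVal sigma3 ψ = Complex.normSq (ψ 0) - Complex.normSq (ψ 1) := by
  simp only [expVal, dotProduct, Pi.star_apply, RCLike.star_def, mulVec, sigma3, of_apply,
    cons_val', cons_val_fin_one, Fin.sum_univ_two, cons_val_zero, cons_val_one, one_mul, zero_mul,
    add_zero, neg_mul, zero_add, mul_neg, Complex.add_re, Complex.mul_re, Complex.conj_re,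
    Complex.conj_im, sub_neg_eq_add, Complex.neg_re, neg_add_rev, Complex.normSq_apply]
  ring

end expVal

noncomputable def blochVector (ψ : EuclideanSpace ℂ (Fin 2)) : EuclideanSpace ℝ (Fin 3) :=
  !₂[expVal sigma1 ψ, expVal sigma2 ψ, expVal sigma3 ψ]

theorem expVal_qubitObs (r₀ : ℝ) (v : EuclideanSpace ℝ (Fin 3)) (ψ : EuclideanSpace ℂ (Fin 2)) :
    expVal (qubitObs r₀ v) ψ = r₀ * ‖ψ‖ ^ 2 + ⟪v, blochVector ψ⟫_ℝ := by
  simp only [qubitObs, expVal_add, expVal_smul, expVal_one, blochVector, PiLp.inner_apply,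
    RCLike.inner_apply, Real.ringHom_apply, Fin.sum_univ_three, cons_val_zero, cons_val_one,
    cons_val]
  ring

theorem norm_blochVector (ψ : EuclideanSpace ℂ (Fin 2)) : ‖blochVector ψ‖ = ‖ψ‖ ^ 2 := by
  rw [← sq_eq_sq₀ (norm_nonneg _) (by positivity), EuclideanSpace.norm_sq_fin_two,
    EuclideanSpace.real_norm_sq_eq]
  simp only [blochVector, expVal_sigma1, expVal_sigma2, expVal_sigma3, RCLike.star_def,
    Complex.mul_re, Complex.mul_im, Complex.conj_re, Complex.conj_im, Complex.normSq_apply,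
    Fin.sum_univ_three, cons_val_zero, cons_val_one, cons_val]
  ring

/-- For qubit observables `A = a₀·I + a·σ`, `B = b₀·I + b·σ`, `C = c₀·I + c·σ`
with linearly independent Bloch vectors `a, b, c`, every unit vector `ψ ∈ ℂ²` satisfies
`v T_{a,b,c}⁻¹ vᵀ = 1` for `v = (⟨A⟩_ψ − a₀, ⟨B⟩_ψ − b₀, ⟨C⟩_ψ − c₀)`; i.e. the triple of
expectation values lies exactly on the boundary of the ellipsoid `{ω_{A,B,C} ≤ 1}`. -/
theorem stmt_11 (a₀ b₀ c₀ : ℝ) (a b c : EuclideanSpace ℝ (Fin 3))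
    (habc : LinearIndependent ℝ ![a, b, c]) :
    ∀ ψ : EuclideanSpace ℂ (Fin 2), ‖ψ‖ = 1 →
      ![expVal (qubitObs a₀ a) ψ - a₀, expVal (qubitObs b₀ b) ψ - b₀,
          expVal (qubitObs c₀ c) ψ - c₀] ⬝ᵥ
        (gram3 a b c)⁻¹.mulVec
          ![expVal (qubitObs a₀ a) ψ - a₀, expVal (qubitObs b₀ b) ψ - b₀,
            expVal (qubitObs c₀ c) ψ - c₀] = 1 := by
  intro ψ hψ
  let u := basisOfLinearIndependentOfCardEqFinrank habc (by simp)
  have hu : ⇑u = ![a, b, c] := coe_basisOfLinearIndependentOfCardEqFinrank habc _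
  have hv : ![expVal (qubitObs a₀ a) ψ - a₀, expVal (qubitObs b₀ b) ψ - b₀,
      expVal (qubitObs c₀ c) ψ - c₀] = fun i ↦ ⟪u i, blochVector ψ⟫_ℝ := by
    ext i
    fin_cases i <;> simp [hu, expVal_qubitObs, hψ]
  have hform := star_dotProduct_inv_gram_mulVec_eq_inner_self u (blochVector ψ)
  rw [star_trivial, real_inner_self_eq_norm_sq, norm_blochVector, hψ] at hform
  rw [gram3_eq_gram, ← hu, hv, hform]
  norm_num
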